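/- arXiv:1708.00393 — 3 statements merged into one kernel-verified Lean document; each statement's English description precedes it below -/
import Mathlib

section
/- Let K be an algebraically closed field of characteristic different from 2, let φ ∈ K be a primitive m-th root of unity, and let m₁,…,m_n be natural numbers such that (φ; m₁,…,m_n) is generic. Let g ≥ 1 and set ξ = diag(φ^{m₁},…,φ^{m_n}, φ^{−m₁},…,φ^{−m_n}) ∈ Sp(2n,K). If (A₁,B₁,…,A_g,B_g) ∈ Sp(2n,K)^{2g} satisfies ∏_{i=1}^{g}[A_i:B_i] = ξ, then every matrix Z = diag(λ₁,…,λ_n,λ₁^{-1},…,λ_n^{-1}) (with all λ_i ∈ K^×) that commutes with every A_i and every B_i satisfies Z² = I_{2n}; that is, every λ_i equals 1 or −1. -/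
open Matrix

/-- The standard symplectic structure matrix `J = [[0, I_n], [−I_n, 0]]`. -/
def sympJ (n : ℕ) (K : Type*) [Field K] :
    Matrix (Fin n ⊕ Fin n) (Fin n ⊕ Fin n) K :=
  Matrix.fromBlocks 0 1 (-1) 0

/-- `A` belongs to `Sp(2n, K)`, i.e. `Aᵀ J A = J`. -/
def IsSymplectic {n : ℕ} {K : Type*} [Field K]
    (A : Matrix (Fin n ⊕ Fin n) (Fin n ⊕ Fin n) K) : Prop :=
  Aᵀ * sympJ n K * A = sympJ n K

/-- `(φ; m₁, …, m_n)` is generic: for all disjoint subsets `J`, `L` of indices, not both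
empty, `∏_{j∈J} φ^{m_j} ≠ ∏_{l∈L} φ^{m_l}`, and `φ^{2 m_i} ≠ 1` for every `i`. -/
def Generic {K : Type*} [Field K] (φ : K) {n : ℕ} (m : Fin n → ℕ) : Prop :=
  (∀ J L : Finset (Fin n), Disjoint J L → (J.Nonempty ∨ L.Nonempty) →
    ∏ j ∈ J, φ ^ m j ≠ ∏ l ∈ L, φ ^ m l) ∧
  ∀ i, φ ^ (2 * m i) ≠ 1

/-!
Suppose `λ_i = μ` with `μ ≠ ±1`. The `μ`-eigenspace `E` of the diagonal matrix `Z` is spanned by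
coordinate vectors, and every matrix commuting with `Z` preserves it, so `M ↦ det (M|_E)` is a
monoid homomorphism on the centralizer of `Z` with values in `K`. It kills every commutator
`[A_j : B_j]`, hence `det (ξ|_E) = 1`. But `ξ|_E` is diagonal, with entries `φ^{m_j}` for
`λ_j = μ` and `φ^{-m_l}` for `λ_l⁻¹ = μ`; since `μ² ≠ 1` these two index sets are disjoint, and the
first contains `i`, which contradicts genericity.
-/

theorem sympJ_eq_neg_J (n : ℕ) (K : Type*) [Field K] : sympJ n K = -J (Fin n) K := by
  simp [sympJ, J, fromBlocks_neg]

theorem IsSymplectic.mem_symplecticGroup {n : ℕ} {K : Type*} [Field K]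
    {A : Matrix (Fin n ⊕ Fin n) (Fin n ⊕ Fin n) K} (hA : IsSymplectic A) :
    A ∈ symplecticGroup (Fin n) K := by
  rw [SymplecticGroup.mem_iff', ← neg_inj]
  simpa [IsSymplectic, sympJ_eq_neg_J] using hA

theorem IsSymplectic.isUnit_det {n : ℕ} {K : Type*} [Field K]
    {A : Matrix (Fin n ⊕ Fin n) (Fin n ⊕ Fin n) K} (hA : IsSymplectic A) : IsUnit A.det :=
  SymplecticGroup.symplectic_det hA.mem_symplecticGroup

theorem Commute.nonsing_inv_right {ι R : Type*} [Fintype ι] [DecidableEq ι] [CommRing R]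
    {M A : Matrix ι ι R} (h : Commute M A) (hA : IsUnit A.det) : Commute M A⁻¹ := by
  have hU : IsUnit A := (isUnit_iff_isUnit_det A).mpr hA
  rw [← hU.unit_spec] at h
  have h' := h.units_inv_right
  rwa [coe_units_inv, hU.unit_spec] at h'

theorem Fintype.prod_subtype_sum_type {α β M : Type*} [Fintype α] [Fintype β] [CommMonoid M]
    (p : α ⊕ β → Prop) [DecidablePred p] (f : α ⊕ β → M) :
    ∏ x : {x // p x}, f x =
      (∏ a ∈ Finset.univ.filter (fun a => p (.inl a)), f (.inl a)) *
        ∏ b ∈ Finset.univ.filter (fun b => p (.inr b)), f (.inr b) := by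
  rw [← Finset.prod_subtype (Finset.univ.filter p) (by simp), Finset.prod_filter,
    Fintype.prod_sum_type, Finset.prod_filter, Finset.prod_filter]

namespace Matrix

variable {ι R : Type*} [Fintype ι] [DecidableEq ι] [CommRing R] [NoZeroDivisors R]

theorem apply_eq_zero_of_commute_diagonal {d : ι → R} {M : Matrix ι ι R}
    (h : Commute (diagonal d) M) {a b : ι} (hab : d a ≠ d b) : M a b = 0 := by
  have hab' := congrFun (congrFun h.eq a) b
  simp only [diagonal_mul, mul_diagonal] at hab'
  have : M a b * (d a - d b) = 0 := by linear_combination hab'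
  exact (mul_eq_zero.mp this).resolve_right (sub_ne_zero.mpr hab)

variable [DecidableEq R]

def restrictEigenspace (d : ι → R) (μ : R) :
    Submonoid.centralizer {diagonal d} →* Matrix {x // d x = μ} {x // d x = μ} R where
  toFun M := (M : Matrix ι ι R).submatrix Subtype.val Subtype.val
  map_one' := submatrix_one _ Subtype.val_injective
  map_mul' M N := by
    have hN : Commute (diagonal d) (N : Matrix ι ι R) :=
      Submonoid.mem_centralizer_iff.mp N.2 _ rfl
    ext a b
    simp only [Submonoid.coe_mul, submatrix_apply, mul_apply]
    rw [← Fintype.sum_subtype_add_sum_subtype (fun x => d x = μ), add_eq_left]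
    refine Finset.sum_eq_zero fun c _ => ?_
    rw [apply_eq_zero_of_commute_diagonal hN fun h => c.2 (h.trans b.2), mul_zero]

theorem det_restrictEigenspace_prod_commutators (d : ι → R) (μ : R) {g : ℕ}
    (A B : Fin g → Matrix ι ι R) (hA : ∀ i, IsUnit (A i).det) (hB : ∀ i, IsUnit (B i).det)
    (hcA : ∀ i, Commute (diagonal d) (A i)) (hcB : ∀ i, Commute (diagonal d) (B i)) :
    ((List.ofFn fun i => A i * B i * (A i)⁻¹ * (B i)⁻¹).prod.submatrix
      (Subtype.val : {x // d x = μ} → ι) Subtype.val).det = 1 := by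
  let S := Submonoid.centralizer {diagonal d}
  let f : S →* R := detMonoidHom.comp (restrictEigenspace d μ)
  have hmem {M : Matrix ι ι R} (hM : Commute (diagonal d) M) : M ∈ S :=
    Submonoid.mem_centralizer_iff.mpr fun _ h => (Set.mem_singleton_iff.mp h) ▸ hM.eq
  have hinv {M : Matrix ι ι R} (hM : Commute (diagonal d) M) (hdet : IsUnit M.det) :
      f ⟨M, hmem hM⟩ * f ⟨M⁻¹, hmem (hM.nonsing_inv_right hdet)⟩ = 1 := by
    rw [← map_mul]
    simp [f, restrictEigenspace, mul_nonsing_inv _ hdet, submatrix_one _ Subtype.val_injective]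
  let c (i : Fin g) : S :=
    ⟨A i, hmem (hcA i)⟩ * ⟨B i, hmem (hcB i)⟩ *
      ⟨(A i)⁻¹, hmem ((hcA i).nonsing_inv_right (hA i))⟩ *
      ⟨(B i)⁻¹, hmem ((hcB i).nonsing_inv_right (hB i))⟩
  have hc (i : Fin g) : f (c i) = 1 := by
    simp only [c, map_mul]
    linear_combination
      (f ⟨B i, _⟩ * f ⟨(B i)⁻¹, _⟩) * hinv (hcA i) (hA i) + hinv (hcB i) (hB i)
  have hprod : ((List.ofFn c).prod : Matrix ι ι R) =
      (List.ofFn fun i => A i * B i * (A i)⁻¹ * (B i)⁻¹).prod := by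
    simp [SubmonoidClass.coe_list_prod, List.map_ofFn, c, Function.comp_def]
  rw [← hprod]
  change f (List.ofFn c).prod = 1
  rw [map_list_prod, List.map_ofFn, List.prod_ofFn]
  exact Finset.prod_eq_one fun i _ => hc i

end Matrix

theorem Generic.prod_mul_prod_inv_ne_one {K : Type*} [Field K] {φ : K} {n : ℕ} {m : Fin n → ℕ}
    (hgen : Generic φ m) {J L : Finset (Fin n)} (hJL : Disjoint J L) (hJ : J.Nonempty) :
    (∏ j ∈ J, φ ^ m j) * ∏ l ∈ L, (φ ^ m l)⁻¹ ≠ 1 := by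
  intro h
  rw [Finset.prod_inv_distrib] at h
  have hL : ∏ l ∈ L, φ ^ m l ≠ 0 := fun h0 => by simp [h0] at h
  exact hgen.1 J L hJL (Or.inl hJ) ((mul_inv_eq_one₀ hL).mp h)

theorem statement0_general {K : Type*} [Field K]
    {φ : K}
    {n : ℕ} (mm : Fin n → ℕ) (hgen : Generic φ mm)
    {g : ℕ}
    (ξ : Matrix (Fin n ⊕ Fin n) (Fin n ⊕ Fin n) K)
    (hξ : ξ = Matrix.diagonal (Sum.elim (fun i => φ ^ mm i) (fun i => (φ ^ mm i)⁻¹)))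
    (A B : Fin g → Matrix (Fin n ⊕ Fin n) (Fin n ⊕ Fin n) K)
    (hA : ∀ i, IsSymplectic (A i)) (hB : ∀ i, IsSymplectic (B i))
    (hprod : (List.ofFn (fun i => A i * B i * (A i)⁻¹ * (B i)⁻¹)).prod = ξ)
    (lam : Fin n → K) (hlam : ∀ i, lam i ≠ 0)
    (Z : Matrix (Fin n ⊕ Fin n) (Fin n ⊕ Fin n) K)
    (hZ : Z = Matrix.diagonal (Sum.elim lam (fun i => (lam i)⁻¹)))
    (hcommA : ∀ i, Z * A i = A i * Z) (hcommB : ∀ i, Z * B i = B i * Z) :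
    ∀ i, lam i = 1 ∨ lam i = -1 := by
  classical
  intro i₀
  by_contra hμ
  subst hZ hξ
  have hdet := det_restrictEigenspace_prod_commutators _ (lam i₀) A B
    (fun i => (hA i).isUnit_det) (fun i => (hB i).isUnit_det) hcommA hcommB
  rw [hprod, submatrix_diagonal _ _ Subtype.val_injective, det_diagonal] at hdet
  simp only [Function.comp_apply] at hdet
  rw [Fintype.prod_subtype_sum_type] at hdet
  refine hgen.prod_mul_prod_inv_ne_one
    (J := {j | lam j = lam i₀}) (L := {l | (lam l)⁻¹ = lam i₀}) ?_ ⟨i₀, by simp⟩ hdet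
  refine Finset.disjoint_left.mpr fun j hj hj' => hμ ?_
  simp only [Finset.mem_filter, Finset.mem_univ, true_and] at hj hj'
  rw [hj] at hj'
  have hsq := mul_inv_cancel₀ (hlam i₀)
  rw [hj'] at hsq
  exact mul_self_eq_one_iff.mp hsq

theorem statement0 {K : Type*} [Field K] [IsAlgClosed K] (h2 : (2 : K) ≠ 0)
    {m : ℕ} {φ : K} (hφ : IsPrimitiveRoot φ m)
    {n : ℕ} (mm : Fin n → ℕ) (hgen : Generic φ mm)
    {g : ℕ} (hg : 1 ≤ g)
    (ξ : Matrix (Fin n ⊕ Fin n) (Fin n ⊕ Fin n) K)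
    (hξ : ξ = Matrix.diagonal (Sum.elim (fun i => φ ^ mm i) (fun i => (φ ^ mm i)⁻¹)))
    (A B : Fin g → Matrix (Fin n ⊕ Fin n) (Fin n ⊕ Fin n) K)
    (hA : ∀ i, IsSymplectic (A i)) (hB : ∀ i, IsSymplectic (B i))
    (hprod : (List.ofFn (fun i => A i * B i * (A i)⁻¹ * (B i)⁻¹)).prod = ξ)
    (lam : Fin n → K) (hlam : ∀ i, lam i ≠ 0)
    (Z : Matrix (Fin n ⊕ Fin n) (Fin n ⊕ Fin n) K)
    (hZ : Z = Matrix.diagonal (Sum.elim lam (fun i => (lam i)⁻¹)))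
    (hcommA : ∀ i, Z * A i = A i * Z) (hcommB : ∀ i, Z * B i = B i * Z) :
    ∀ i, lam i = 1 ∨ lam i = -1 :=
  statement0_general mm hgen ξ hξ A B hA hB hprod lam hlam Z hZ hcommA hcommB
end

section
/- For every k-tuple (Z₁,…,Z_k) of vectors in {1,−1}^n there exists a permutation Φ of {1,…,n} such that (Φ·Z₁,…,Φ·Z_k) is in nested block form. -/
/-- Nested block-size data for `k` levels over `{1,…,n}` (0-indexed levels `0,…,k-1`,
level `h` having `2^(h+1)` blocks): the two top blocks partition `n`, and each block
splits into the two blocks below it. -/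
def NestedData (k n : ℕ) (a : ℕ → ℕ → ℕ) : Prop :=
  a 0 0 + a 0 1 = n ∧
  ∀ h i, h + 1 < k → i < 2 ^ (h + 1) → a (h + 1) (2 * i) + a (h + 1) (2 * i + 1) = a h i

/-- The index of the consecutive interval (of lengths `a h 0, a h 1, …`) containing `s`. -/
def blockIdx (a : ℕ → ℕ → ℕ) (h s : ℕ) : ℕ :=
  Nat.findGreatest (fun i => ∑ j ∈ Finset.range i, a h j ≤ s) (2 ^ (h + 1) - 1)

/-- The nested block vector at level `h`: `1` on odd-indexed intervals (even 0-indexed),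
`-1` on even-indexed ones. -/
def blockVec (a : ℕ → ℕ → ℕ) (h n : ℕ) : Fin n → ℤˣ :=
  fun s => if blockIdx a h (s : ℕ) % 2 = 0 then 1 else -1

/-- The action of a permutation `σ` of `{1,…,n}` on a sign vector: `(σ·W)(s) = W(σ⁻¹ s)`. -/
def permAct {n : ℕ} (σ : Equiv.Perm (Fin n)) (W : Fin n → ℤˣ) : Fin n → ℤˣ :=
  fun s => W (σ⁻¹ s)

/-- A `k`-tuple of sign vectors is in nested block form if it is the tuple of
nested block vectors of some nested block-size data. -/
def InNestedBlockForm (k n : ℕ) (Z : Fin k → Fin n → ℤˣ) : Prop :=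
  ∃ a : ℕ → ℕ → ℕ, NestedData k n a ∧ ∀ h : Fin k, Z h = blockVec a (h : ℕ) n

/-!
Record the signs of a point `s` as bits `b₀(s), …, b_{k-1}(s)` (`0` for `+1`, `1` for `-1`)
and read the first `h + 1` of them as a binary number `c_h(s)`, most significant first, so
that `c_h = c_{h+1} / 2` and `c_h ≡ b_h (mod 2)`. Sort the points by `c_{k-1}`; then every
`c_h` is monotone along the sorted order, so the points with `c_h = i` form the `i`-th
consecutive block at level `h`. Taking `a^h_i = #{s | c_h(s) = i}`, the relation
`c_h = c_{h+1} / 2` gives the nesting, and the parity of the block index is the sign `Z_h`.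
-/

open Finset

namespace NestedBlock

def binaryPrefix (b : ℕ → Bool) : ℕ → ℕ
  | 0 => (b 0).toNat
  | h + 1 => 2 * binaryPrefix b h + (b (h + 1)).toNat

section binaryPrefix

variable (b : ℕ → Bool)

lemma binaryPrefix_lt (h : ℕ) : binaryPrefix b h < 2 ^ (h + 1) := by
  induction h with
  | zero => have := Bool.toNat_le (b 0); simp only [binaryPrefix]; omega
  | succ h ih =>
    have := Bool.toNat_le (b (h + 1))
    rw [binaryPrefix, pow_succ]; omega

lemma binaryPrefix_succ_div_two (h : ℕ) : binaryPrefix b (h + 1) / 2 = binaryPrefix b h := by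
  have := Bool.toNat_le (b (h + 1))
  rw [binaryPrefix]; omega

lemma binaryPrefix_add_div_two_pow (h m : ℕ) :
    binaryPrefix b (h + m) / 2 ^ m = binaryPrefix b h := by
  induction m with
  | zero => simp
  | succ m ih =>
    rw [pow_succ', ← Nat.div_div_eq_div_mul, ← add_assoc, binaryPrefix_succ_div_two, ih]

lemma binaryPrefix_mod_two (h : ℕ) : binaryPrefix b h % 2 = (b h).toNat := by
  have := Bool.toNat_le (b h)
  cases h <;> simp only [binaryPrefix] <;> omega

end binaryPrefix

lemma card_filter_eq_two_mul_add_card_filter_eq_two_mul_add_one {α : Type*} [DecidableEq α]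
    (s : Finset α) (f : α → ℕ) (i : ℕ) :
    #(s.filter fun x => f x = 2 * i) + #(s.filter fun x => f x = 2 * i + 1)
      = #(s.filter fun x => f x / 2 = i) := by
  rw [← card_union_of_disjoint (disjoint_filter.mpr fun _ _ h => by omega), ← filter_or]
  congr 1
  exact filter_congr fun _ _ => by omega

lemma sum_range_card_filter_eq {α : Type*} [Fintype α] (g : α → ℕ) (i : ℕ) :
    ∑ j ∈ range i, #(univ.filter fun t => g t = j) = #(univ.filter fun t => g t < i) := by
  rw [card_eq_sum_card_fiberwise (f := g) (t := range i) fun x hx => by simpa using hx]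
  refine sum_congr rfl fun j hj => ?_
  rw [filter_filter]
  exact congrArg card <|
    filter_congr fun t _ => ⟨fun htj => ⟨htj ▸ mem_range.mp hj, htj⟩, And.right⟩

/-- For a monotone labelling of `Fin n`, the consecutive blocks cut out by the fiber sizes
are exactly the fibers. -/
lemma findGreatest_sum_card_fiber_eq {n : ℕ} {g : Fin n → ℕ} (hg : Monotone g) {M : ℕ}
    (hM : ∀ t, g t ≤ M) (s : Fin n) :
    Nat.findGreatest (fun i => ∑ j ∈ range i, #(univ.filter fun t => g t = j) ≤ (s : ℕ)) M
      = g s := by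
  simp only [sum_range_card_filter_eq]
  have below : #(univ.filter fun t => g t < g s) ≤ s := by
    calc #(univ.filter fun t => g t < g s) ≤ #(Iio s) :=
          card_le_card fun t ht => mem_Iio.mpr <| lt_of_not_ge fun hst =>
            (not_le.mpr (mem_filter.mp ht).2) (hg hst)
      _ = s := Fin.card_Iio s
  have above : (s : ℕ) < #(univ.filter fun t => g t < g s + 1) := by
    calc (s : ℕ) < #(Iic s) := by rw [Fin.card_Iic]; omega
      _ ≤ _ := card_le_card fun t ht => by
          simpa [Nat.lt_succ_iff] using hg (mem_Iic.mp ht)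
  rw [Nat.findGreatest_eq_iff]
  refine ⟨hM s, fun _ => below, fun m hm _ hle => ?_⟩
  exact (lt_of_le_of_lt hle above).not_ge <|
    card_le_card <| monotone_filter_right _ fun t _ (ht : g t < g s + 1) => by omega

def prefixCounts {n : ℕ} (B : Fin n → ℕ → Bool) (h i : ℕ) : ℕ :=
  #(univ.filter fun t => binaryPrefix (B t) h = i)

variable {k n : ℕ} (B : Fin n → ℕ → Bool)

lemma nestedData_prefixCounts : NestedData k n (prefixCounts B) := by
  refine ⟨?_, fun h i _ _ => ?_⟩
  · have top := card_filter_eq_two_mul_add_card_filter_eq_two_mul_add_one univ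
      (fun t => binaryPrefix (B t) 0) 0
    have hlt (t : Fin n) : binaryPrefix (B t) 0 / 2 = 0 := Nat.div_eq_of_lt (binaryPrefix_lt _ 0)
    rw [filter_true_of_mem fun t _ => hlt t, card_univ, Fintype.card_fin] at top
    simpa [prefixCounts] using top
  · simpa only [prefixCounts, binaryPrefix_succ_div_two] using
      card_filter_eq_two_mul_add_card_filter_eq_two_mul_add_one univ
        (fun t => binaryPrefix (B t) (h + 1)) i

variable {B}

lemma monotone_binaryPrefix (hB : Monotone fun t => binaryPrefix (B t) (k - 1)) {h : ℕ}
    (hh : h < k) : Monotone fun t => binaryPrefix (B t) h := by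
  intro s t hst
  have := Nat.div_le_div_right (c := 2 ^ (k - 1 - h)) (hB hst)
  simpa only [← binaryPrefix_add_div_two_pow _ h (k - 1 - h),
    Nat.add_sub_cancel' (by omega : h ≤ k - 1)]

lemma blockVec_prefixCounts (hB : Monotone fun t => binaryPrefix (B t) (k - 1)) {h : ℕ}
    (hh : h < k) (s : Fin n) :
    blockVec (prefixCounts B) h n s = if B s h then -1 else 1 := by
  have hidx : blockIdx (prefixCounts B) h s = binaryPrefix (B s) h :=
    findGreatest_sum_card_fiber_eq (monotone_binaryPrefix hB hh)
      (fun t => Nat.le_sub_one_of_lt (binaryPrefix_lt _ h)) s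
  cases hb : B s h <;> simp [blockVec, hidx, binaryPrefix_mod_two, hb]

end NestedBlock

open NestedBlock

def signBits {k n : ℕ} (Z : Fin k → Fin n → ℤˣ) (s : Fin n) (j : ℕ) : Bool :=
  if hj : j < k then Z ⟨j, hj⟩ s ≠ 1 else false

lemma ite_signBits {k n : ℕ} (Z : Fin k → Fin n → ℤˣ) (h : Fin k) (s : Fin n) :
    (if signBits Z s h then -1 else 1) = Z h s := by
  rcases Int.units_eq_one_or (Z h s) with hz | hz <;> simp [signBits, hz]

theorem statement3_general {k n : ℕ} (Z : Fin k → Fin n → ℤˣ) :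
    ∃ σ : Equiv.Perm (Fin n), InNestedBlockForm k n (fun h => permAct σ (Z h)) := by
  set code : Fin n → ℕ := fun s => binaryPrefix (signBits Z s) (k - 1)
  set σ := Tuple.sort code
  set B : Fin n → ℕ → Bool := fun t => signBits Z (σ t)
  have hB : Monotone fun t => binaryPrefix (B t) (k - 1) := Tuple.monotone_sort code
  refine ⟨σ⁻¹, prefixCounts B, nestedData_prefixCounts B, fun h => funext fun s => ?_⟩
  rw [blockVec_prefixCounts hB h.isLt, ite_signBits]
  simp [permAct]

theorem statement3 {k n : ℕ} (hk : 1 ≤ k) (Z : Fin k → Fin n → ℤˣ) :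
    ∃ σ : Equiv.Perm (Fin n), InNestedBlockForm k n (fun h => permAct σ (Z h)) :=
  statement3_general Z
end

section
/- Let (Z₁,…,Z_k) be any k-tuple of vectors in {1,−1}^n and let λ, μ be permutations of {1,…,n} such that both (λ·Z₁,…,λ·Z_k) and (μ·Z₁,…,μ·Z_k) are in nested block form. Then λ·Z_h = μ·Z_h for every h = 1,…,k. In particular, the nested block-size data realizing a given k-tuple in nested block form after some permutation is uniquely determined by the tuple. -/
/-!
Comparing the two nested block forms through the permutation `σ = λ μ⁻¹`, the entries `s` and
`σ s` carry the same sign at every level. Since the block containing a position at level `h + 1`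
is one of the two halves of its block at level `h`, these signs determine the block indices
level by level, so `σ` maps every block of one form onto the block with the same index in the
other. Hence corresponding blocks have the same size, and the two forms coincide.
-/

open Finset

def blockStart (a : ℕ → ℕ → ℕ) (h i : ℕ) : ℕ := ∑ j ∈ range i, a h j

lemma blockStart_mono (a : ℕ → ℕ → ℕ) (h : ℕ) : Monotone (blockStart a h) :=
  fun _ _ hij => sum_le_sum_of_subset (range_subset_range.mpr hij)

lemma blockStart_succ (a : ℕ → ℕ → ℕ) (h i : ℕ) :
    blockStart a h (i + 1) = blockStart a h i + a h i :=
  sum_range_succ _ _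

lemma Nat.findGreatest_congr {P Q : ℕ → Prop} [DecidablePred P] [DecidablePred Q] {m : ℕ}
    (hPQ : ∀ i ≤ m, P i ↔ Q i) : Nat.findGreatest P m = Nat.findGreatest Q m := by
  induction m with
  | zero => rfl
  | succ m ih =>
    rw [Nat.findGreatest_succ, Nat.findGreatest_succ, ih fun i hi => hPQ i (hi.trans m.le_succ)]
    exact if_congr (hPQ _ le_rfl) rfl rfl

section Blocks

variable {k n h s i : ℕ} {a b : ℕ → ℕ → ℕ}

lemma blockIdx_lt_two_pow (a : ℕ → ℕ → ℕ) (h s : ℕ) : blockIdx a h s < 2 ^ (h + 1) :=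
  (Nat.findGreatest_le _).trans_lt (Nat.sub_one_lt (Nat.two_pow_pos _).ne')

lemma blockStart_blockIdx_le (a : ℕ → ℕ → ℕ) (h s : ℕ) : blockStart a h (blockIdx a h s) ≤ s :=
  Nat.findGreatest_spec (P := fun i => blockStart a h i ≤ s) (Nat.zero_le _) (Nat.zero_le s)

lemma blockIdx_eq_of_mem (hi : i < 2 ^ (h + 1)) (hle : blockStart a h i ≤ s)
    (hlt : s < blockStart a h (i + 1)) : blockIdx a h s = i := by
  refine le_antisymm ?_ (Nat.le_findGreatest (Nat.le_sub_one_of_lt hi) hle)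
  by_contra! hgt
  exact absurd ((blockStart_mono a h hgt).trans (blockStart_blockIdx_le a h s)) (not_le.mpr hlt)

lemma blockVec_congr (hab : ∀ j < 2 ^ (h + 1), a h j = b h j) :
    blockVec a h n = blockVec b h n := by
  have hStart : ∀ m ≤ 2 ^ (h + 1) - 1, blockStart a h m = blockStart b h m := fun m hm =>
    sum_congr rfl fun j hj => hab j (by have := mem_range.mp hj; omega)
  have hIdx : ∀ s, blockIdx a h s = blockIdx b h s := fun s =>
    Nat.findGreatest_congr fun m hm => iff_of_eq (congrArg (· ≤ s) (hStart m hm))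
  funext s
  simp only [blockVec, hIdx]

lemma blockIdx_mod_two_eq_of_blockVec_eq {t u : Fin n} {h' : ℕ}
    (he : blockVec a h n t = blockVec b h' n u) :
    blockIdx a h t % 2 = blockIdx b h' u % 2 := by
  unfold blockVec at he
  split_ifs at he <;> simp_all

namespace NestedData

lemma blockStart_two_mul (ha : NestedData k n a) (hh : h + 1 < k) :
    ∀ i ≤ 2 ^ (h + 1), blockStart a (h + 1) (2 * i) = blockStart a h i := by
  intro i
  induction i with
  | zero => simp [blockStart]
  | succ i ih =>
    intro hi
    rw [show 2 * (i + 1) = 2 * i + 1 + 1 by ring, blockStart_succ, blockStart_succ,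
      blockStart_succ, ← ha.2 h i hh (by omega), ← ih (by omega)]
    ring

lemma blockStart_two_pow (ha : NestedData k n a) : ∀ h < k, blockStart a h (2 ^ (h + 1)) = n := by
  intro h
  induction h with
  | zero => simpa [blockStart, sum_range_succ] using fun _ => ha.1
  | succ h ih =>
    intro hh
    rw [pow_succ', ha.blockStart_two_mul hh _ le_rfl, ih (by omega)]

lemma lt_blockStart_blockIdx_succ (ha : NestedData k n a) (hh : h < k) (hs : s < n) :
    s < blockStart a h (blockIdx a h s + 1) := by
  have hlt := blockIdx_lt_two_pow a h s
  rcases Nat.lt_or_ge (blockIdx a h s + 1) (2 ^ (h + 1)) with hnext | hlast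
  · exact not_le.mp (Nat.findGreatest_is_greatest (P := fun i => blockStart a h i ≤ s)
      (Nat.lt_succ_self _) (Nat.le_sub_one_of_lt hnext))
  · rwa [show blockIdx a h s + 1 = 2 ^ (h + 1) by omega, ha.blockStart_two_pow h hh]

lemma blockIdx_eq_iff (ha : NestedData k n a) (hh : h < k) (hs : s < n)
    (hi : i < 2 ^ (h + 1)) :
    blockIdx a h s = i ↔ blockStart a h i ≤ s ∧ s < blockStart a h (i + 1) := by
  refine ⟨?_, fun hmem => blockIdx_eq_of_mem hi hmem.1 hmem.2⟩
  rintro rfl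
  exact ⟨blockStart_blockIdx_le a h s, ha.lt_blockStart_blockIdx_succ hh hs⟩

lemma blockIdx_succ_div_two (ha : NestedData k n a) (hh : h + 1 < k) (hs : s < n) :
    blockIdx a (h + 1) s / 2 = blockIdx a h s := by
  set i := blockIdx a h s
  have hi : i < 2 ^ (h + 1) := blockIdx_lt_two_pow a h s
  have hi' : 2 * i + 1 < 2 ^ (h + 1 + 1) := by rw [pow_succ]; omega
  have hle : blockStart a (h + 1) (2 * i) ≤ s := by
    rw [ha.blockStart_two_mul hh i hi.le]; exact blockStart_blockIdx_le a h s
  have hlt : s < blockStart a (h + 1) (2 * i + 1 + 1) := by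
    rw [show 2 * i + 1 + 1 = 2 * (i + 1) by ring, ha.blockStart_two_mul hh (i + 1) hi]
    exact ha.lt_blockStart_blockIdx_succ (by omega) hs
  rcases Nat.lt_or_ge s (blockStart a (h + 1) (2 * i + 1)) with hleft | hright
  · rw [blockIdx_eq_of_mem (by omega) hle hleft]; omega
  · rw [blockIdx_eq_of_mem hi' hright hlt]; omega

/-- The signs of a position at the levels `0, …, h` are the binary digits of its block index
at level `h`. -/
lemma blockIdx_eq_of_blockVec_eq (ha : NestedData k n a) (hb : NestedData k n b) {t u : Fin n}
    (he : ∀ h < k, blockVec a h n t = blockVec b h n u) :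
    ∀ h < k, blockIdx a h t = blockIdx b h u := by
  intro h
  induction h with
  | zero =>
    intro hk
    have hpar := blockIdx_mod_two_eq_of_blockVec_eq (he 0 hk)
    have := blockIdx_lt_two_pow a 0 t
    have := blockIdx_lt_two_pow b 0 u
    omega
  | succ h ih =>
    intro hk
    have hpar := blockIdx_mod_two_eq_of_blockVec_eq (he (h + 1) hk)
    have := ih (by omega)
    have := ha.blockIdx_succ_div_two hk t.isLt
    have := hb.blockIdx_succ_div_two hk u.isLt
    omega

lemma card_blockIdx_eq (ha : NestedData k n a) (hh : h < k) (hi : i < 2 ^ (h + 1)) :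
    #{s : Fin n | blockIdx a h s = i} = a h i := by
  have hend : blockStart a h (i + 1) ≤ n :=
    ha.blockStart_two_pow h hh ▸ blockStart_mono a h hi
  have hIco : #{s : Fin n | blockIdx a h s = i} =
      #(Ico (blockStart a h i) (blockStart a h (i + 1))) := by
    refine card_bij (fun s _ => (s : ℕ)) ?_ (fun _ _ _ _ => Fin.ext) ?_
    · intro s hs
      simpa [ha.blockIdx_eq_iff hh s.isLt hi] using hs
    · intro t ht
      have htn : t < n := (mem_Ico.mp ht).2.trans_le hend
      exact ⟨⟨t, htn⟩, by simpa [ha.blockIdx_eq_iff hh htn hi] using ht, rfl⟩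
  rw [hIco, Nat.card_Ico, blockStart_succ]
  omega

lemma eq_of_blockVec_perm_apply (ha : NestedData k n a) (hb : NestedData k n b)
    (σ : Equiv.Perm (Fin n)) (hσ : ∀ h < k, ∀ s, blockVec a h n (σ s) = blockVec b h n s) :
    ∀ h < k, ∀ i < 2 ^ (h + 1), a h i = b h i := by
  intro h hh i hi
  rw [← ha.card_blockIdx_eq hh hi, ← hb.card_blockIdx_eq hh hi]
  refine card_equiv σ.symm fun s => ?_
  have hs := ha.blockIdx_eq_of_blockVec_eq hb (t := s) (u := σ.symm s)
    (fun h hh => by simpa using hσ h hh (σ.symm s)) h hh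
  simp [hs]

end NestedData

end Blocks

lemma blockVec_mul_inv_apply {k n : ℕ} {Z : Fin k → Fin n → ℤˣ} {lam mu : Equiv.Perm (Fin n)}
    {a b : ℕ → ℕ → ℕ} (hZa : ∀ h : Fin k, permAct lam (Z h) = blockVec a h n)
    (hZb : ∀ h : Fin k, permAct mu (Z h) = blockVec b h n) :
    ∀ h < k, ∀ s, blockVec a h n ((lam * mu⁻¹) s) = blockVec b h n s := by
  intro h hh s
  rw [← hZa ⟨h, hh⟩, ← hZb ⟨h, hh⟩]
  simp [permAct]

theorem statement5_general {k n : ℕ} (Z : Fin k → Fin n → ℤˣ)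
    (lam mu : Equiv.Perm (Fin n))
    (hlam : InNestedBlockForm k n (fun h => permAct lam (Z h)))
    (hmu : InNestedBlockForm k n (fun h => permAct mu (Z h))) :
    (∀ h : Fin k, permAct lam (Z h) = permAct mu (Z h)) ∧
    ∀ a b : ℕ → ℕ → ℕ, NestedData k n a → NestedData k n b →
      (∀ h : Fin k, permAct lam (Z h) = blockVec a (h : ℕ) n) →
      (∀ h : Fin k, permAct mu (Z h) = blockVec b (h : ℕ) n) →
      ∀ h < k, ∀ i < 2 ^ (h + 1), a h i = b h i := by
  have hsizes : ∀ a b : ℕ → ℕ → ℕ, NestedData k n a → NestedData k n b →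
      (∀ h : Fin k, permAct lam (Z h) = blockVec a (h : ℕ) n) →
      (∀ h : Fin k, permAct mu (Z h) = blockVec b (h : ℕ) n) →
      ∀ h < k, ∀ i < 2 ^ (h + 1), a h i = b h i := fun _ _ ha hb hZa hZb =>
    ha.eq_of_blockVec_perm_apply hb _ (blockVec_mul_inv_apply hZa hZb)
  obtain ⟨a, ha, hZa⟩ := hlam
  obtain ⟨b, hb, hZb⟩ := hmu
  refine ⟨fun h => ?_, hsizes⟩
  exact (hZa h).trans ((blockVec_congr (hsizes a b ha hb hZa hZb h h.isLt)).trans (hZb h).symm)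

theorem statement5 {k n : ℕ} (hk : 1 ≤ k) (Z : Fin k → Fin n → ℤˣ)
    (lam mu : Equiv.Perm (Fin n))
    (hlam : InNestedBlockForm k n (fun h => permAct lam (Z h)))
    (hmu : InNestedBlockForm k n (fun h => permAct mu (Z h))) :
    (∀ h : Fin k, permAct lam (Z h) = permAct mu (Z h)) ∧
    ∀ a b : ℕ → ℕ → ℕ, NestedData k n a → NestedData k n b →
      (∀ h : Fin k, permAct lam (Z h) = blockVec a (h : ℕ) n) →
      (∀ h : Fin k, permAct mu (Z h) = blockVec b (h : ℕ) n) →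
      ∀ h < k, ∀ i < 2 ^ (h + 1), a h i = b h i :=
  statement5_general Z lam mu hlam hmu
end
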